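/- arXiv:2105.13660 — 3 statements merged into one kernel-verified Lean document; each statement's English description precedes it below -/
import Mathlib

section
/- Let V be a ℚ-vector space. Let s : P³V ⊗ P²V → P⁵V be the linear map induced by multiplication in the symmetric algebra, s(u ⊗ v) = uv. Then s is surjective and the image of m : V ⊗ Λ²(P²V) → P³V ⊗ P²V equals the kernel of s; in other words, the sequence 0 → R(V) → V ⊗ Λ²(P²V) →(m) P³V ⊗ P²V →(s) P⁵V → 0 is exact. -/
/-!
Common constructions: for a `ℚ`-vector space `V`, the symmetric powers
`P²V, P³V, P⁴V, P⁵V` (as `SqM V`, `CubM V`, `QuarM V`, `QuinM V`), built as iterated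
quotients of tensor products, with the multiplication maps between them; the exterior
square `Λ²W` (as `AltM W`) with the wedge map; and the 5-linear map `⋆` (as `star5`).
-/

open TensorProduct

noncomputable section

variable (V W : Type) [AddCommGroup V] [Module ℚ V] [AddCommGroup W] [Module ℚ W]

/-- The relations defining the symmetric square `P²V` as a quotient of `V ⊗ V`. -/
def sqRel : Submodule ℚ (V ⊗[ℚ] V) :=
  Submodule.span ℚ {z | ∃ x y : V, z = x ⊗ₜ[ℚ] y - y ⊗ₜ[ℚ] x}

/-- The symmetric square `P²V`. -/
abbrev SqM : Type := (V ⊗[ℚ] V) ⧸ sqRel V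

/-- The product `V × V → P²V`, `(x, y) ↦ xy`. -/
def sqm : V →ₗ[ℚ] V →ₗ[ℚ] SqM V :=
  (TensorProduct.mk ℚ V V).compr₂ (sqRel V).mkQ

/-- The relations presenting the symmetric cube `P³V` as a quotient of `V ⊗ P²V`. -/
def cubRel : Submodule ℚ (V ⊗[ℚ] SqM V) :=
  Submodule.span ℚ {z | ∃ x y w : V, z = x ⊗ₜ[ℚ] sqm V y w - y ⊗ₜ[ℚ] sqm V x w}

/-- The symmetric cube `P³V`. -/
abbrev CubM : Type := (V ⊗[ℚ] SqM V) ⧸ cubRel V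

/-- The product `V × P²V → P³V`. -/
def mulC : V →ₗ[ℚ] SqM V →ₗ[ℚ] CubM V :=
  (TensorProduct.mk ℚ V (SqM V)).compr₂ (cubRel V).mkQ

/-- The relations presenting `P⁴V` as a quotient of `V ⊗ P³V`. -/
def quarRel : Submodule ℚ (V ⊗[ℚ] CubM V) :=
  Submodule.span ℚ {z | ∃ (x y : V) (u : SqM V), z = x ⊗ₜ[ℚ] mulC V y u - y ⊗ₜ[ℚ] mulC V x u}

/-- The symmetric fourth power `P⁴V`. -/
abbrev QuarM : Type := (V ⊗[ℚ] CubM V) ⧸ quarRel V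

/-- The product `V × P³V → P⁴V`. -/
def mulQ : V →ₗ[ℚ] CubM V →ₗ[ℚ] QuarM V :=
  (TensorProduct.mk ℚ V (CubM V)).compr₂ (quarRel V).mkQ

/-- The relations presenting `P⁵V` as a quotient of `V ⊗ P⁴V`. -/
def quinRel : Submodule ℚ (V ⊗[ℚ] QuarM V) :=
  Submodule.span ℚ {z | ∃ (x y : V) (c : CubM V), z = x ⊗ₜ[ℚ] mulQ V y c - y ⊗ₜ[ℚ] mulQ V x c}

/-- The symmetric fifth power `P⁵V`. -/
abbrev QuinM : Type := (V ⊗[ℚ] QuarM V) ⧸ quinRel V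

/-- The product `V × P⁴V → P⁵V`. -/
def mulQn : V →ₗ[ℚ] QuarM V →ₗ[ℚ] QuinM V :=
  (TensorProduct.mk ℚ V (QuarM V)).compr₂ (quinRel V).mkQ

/-- The relations defining the exterior square `Λ²W` as a quotient of `W ⊗ W`. -/
def altRel2 : Submodule ℚ (W ⊗[ℚ] W) :=
  Submodule.span ℚ {z | ∃ x : W, z = x ⊗ₜ[ℚ] x}

/-- The exterior square `Λ²W`. -/
abbrev AltM : Type := (W ⊗[ℚ] W) ⧸ altRel2 W

/-- The wedge product `W × W → Λ²W`. -/
def wdg : W →ₗ[ℚ] W →ₗ[ℚ] AltM W :=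
  (TensorProduct.mk ℚ W W).compr₂ (altRel2 W).mkQ

/-- The element `⋆(x₁,…,x₅) = Σ_{i ∈ ℤ/5} xᵢ ⊗ (x_{i+1}x_{i+2} ∧ x_{i+3}x_{i+4})`
of `V ⊗ Λ²(P²V)`. -/
def star5 (x₁ x₂ x₃ x₄ x₅ : V) : V ⊗[ℚ] AltM (SqM V) :=
    x₁ ⊗ₜ[ℚ] wdg (SqM V) (sqm V x₂ x₃) (sqm V x₄ x₅)
  + x₂ ⊗ₜ[ℚ] wdg (SqM V) (sqm V x₃ x₄) (sqm V x₅ x₁)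
  + x₃ ⊗ₜ[ℚ] wdg (SqM V) (sqm V x₄ x₅) (sqm V x₁ x₂)
  + x₄ ⊗ₜ[ℚ] wdg (SqM V) (sqm V x₅ x₁) (sqm V x₂ x₃)
  + x₅ ⊗ₜ[ℚ] wdg (SqM V) (sqm V x₁ x₂) (sqm V x₃ x₄)

/-! `P⁵V` is spanned by the monomials `qxyzw = s(q(xy) ⊗ zw)`, so `s` is onto, and
`s ∘ m = 0` since `s(qu ⊗ v)` is symmetric in `u` and `v`. Conversely, let `N ⊆ range m` be the
span of the elements `qu ⊗ v - qv ⊗ u`. Modulo `N` one has `[yu ⊗ xq] = [y(xq) ⊗ u]`, which is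
symmetric in `x` and `y`; hence `q·x·c ↦ [c ⊗ xq]` descends along the presentations of `P⁴V`
and `P⁵V` to a map `φ : P⁵V → (P³V ⊗ P²V)/N` with `φ ∘ s` the quotient map, so `ker s ⊆ N`. -/

lemma sqm_comm (x y : V) : sqm V x y = sqm V y x :=
  (Submodule.Quotient.eq _).2 (Submodule.subset_span ⟨x, y, rfl⟩)

lemma mulC_swap (x y w : V) : mulC V x (sqm V y w) = mulC V y (sqm V x w) :=
  (Submodule.Quotient.eq _).2 (Submodule.subset_span ⟨x, y, w, rfl⟩)

lemma mulQ_swap (x y : V) (u : SqM V) : mulQ V x (mulC V y u) = mulQ V y (mulC V x u) :=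
  (Submodule.Quotient.eq _).2 (Submodule.subset_span ⟨x, y, u, rfl⟩)

lemma mulC_rotate (x y z : V) : mulC V x (sqm V y z) = mulC V y (sqm V z x) := by
  rw [mulC_swap, sqm_comm]

lemma mulQ_mulC_sqm_comm (x y z w : V) :
    mulQ V x (mulC V y (sqm V z w)) = mulQ V z (mulC V w (sqm V x y)) := by
  rw [mulC_swap V y z w, mulQ_swap V x z, sqm_comm V y w, mulC_swap V x w y]

section LinearMaps

variable {M : Type*} [AddCommGroup M] [Module ℚ M]

def quarLift (f : V →ₗ[ℚ] CubM V →ₗ[ℚ] M)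
    (hf : ∀ (x y : V) (u : SqM V), f x (mulC V y u) = f y (mulC V x u)) : QuarM V →ₗ[ℚ] M :=
  (quarRel V).liftQ (TensorProduct.lift f) <| Submodule.span_le.2 <| by
    rintro _ ⟨x, y, u, rfl⟩
    simp [hf]

@[simp] lemma quarLift_mulQ (f : V →ₗ[ℚ] CubM V →ₗ[ℚ] M)
    (hf : ∀ (x y : V) (u : SqM V), f x (mulC V y u) = f y (mulC V x u)) (x : V) (c : CubM V) :
    quarLift V f hf (mulQ V x c) = f x c :=
  TensorProduct.lift.tmul x c

def quinLift (f : V →ₗ[ℚ] QuarM V →ₗ[ℚ] M)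
    (hf : ∀ (x y : V) (c : CubM V), f x (mulQ V y c) = f y (mulQ V x c)) : QuinM V →ₗ[ℚ] M :=
  (quinRel V).liftQ (TensorProduct.lift f) <| Submodule.span_le.2 <| by
    rintro _ ⟨x, y, c, rfl⟩
    simp [hf]

@[simp] lemma quinLift_mulQn (f : V →ₗ[ℚ] QuarM V →ₗ[ℚ] M)
    (hf : ∀ (x y : V) (c : CubM V), f x (mulQ V y c) = f y (mulQ V x c)) (x : V) (d : QuarM V) :
    quinLift V f hf (mulQn V x d) = f x d :=
  TensorProduct.lift.tmul x d

lemma sqM_bilinear_ext {f g : SqM V →ₗ[ℚ] SqM V →ₗ[ℚ] M}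
    (h : ∀ x y z w : V, f (sqm V x y) (sqm V z w) = g (sqm V x y) (sqm V z w)) : f = g := by
  ext x y z w
  exact h x y z w

lemma cubM_tensor_sqM_ext {f g : CubM V ⊗[ℚ] SqM V →ₗ[ℚ] M}
    (h : ∀ q x y z w : V, f (mulC V q (sqm V x y) ⊗ₜ sqm V z w)
      = g (mulC V q (sqm V x y) ⊗ₜ sqm V z w)) : f = g := by
  ext q x y z w
  exact h q x y z w

lemma quinM_ext {f g : QuinM V →ₗ[ℚ] M}
    (h : ∀ q x y z w : V, f (mulQn V q (mulQ V x (mulC V y (sqm V z w))))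
      = g (mulQn V q (mulQ V x (mulC V y (sqm V z w))))) : f = g := by
  ext q x y z w
  exact h q x y z w

lemma tensor_altM_ext {f g : V ⊗[ℚ] AltM (SqM V) →ₗ[ℚ] M}
    (h : ∀ (q : V) (u v : SqM V), f (q ⊗ₜ wdg (SqM V) u v) = g (q ⊗ₜ wdg (SqM V) u v)) :
    f = g := by
  ext q x y z w
  exact h q (sqm V x y) (sqm V z w)

end LinearMaps

def tmulSwapRel : Submodule ℚ (CubM V ⊗[ℚ] SqM V) :=
  Submodule.span ℚ {z | ∃ (q : V) (u v : SqM V), z = mulC V q u ⊗ₜ[ℚ] v - mulC V q v ⊗ₜ[ℚ] u}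

lemma mk_mulC_tmul_comm (q : V) (u v : SqM V) :
    (Submodule.Quotient.mk (mulC V q u ⊗ₜ[ℚ] v) : _ ⧸ tmulSwapRel V)
      = Submodule.Quotient.mk (mulC V q v ⊗ₜ[ℚ] u) :=
  (Submodule.Quotient.eq _).2 (Submodule.subset_span ⟨q, u, v, rfl⟩)

def quinToQuot : QuinM V →ₗ[ℚ] (CubM V ⊗[ℚ] SqM V) ⧸ tmulSwapRel V :=
  quinLift V (quarLift V (LinearMap.lflip.toLinearMap ∘ₗ (sqm V).compr₂
      ((TensorProduct.mk ℚ (CubM V) (SqM V)).compr₂ (tmulSwapRel V).mkQ).flip)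
    fun x y u => by
      ext q
      simp only [LinearMap.coe_comp, LinearEquiv.coe_coe, Function.comp_apply,
        LinearMap.lflip_apply, LinearMap.flip_apply, LinearMap.compr₂_apply, mk_apply,
        Submodule.mkQ_apply]
      rw [mk_mulC_tmul_comm, mulC_swap V y x q, mk_mulC_tmul_comm]).flip
    fun x y c => by simp [sqm_comm]

@[simp] lemma quinToQuot_mulQn_mulQ (q x : V) (c : CubM V) :
    quinToQuot V (mulQn V q (mulQ V x c)) = Submodule.Quotient.mk (c ⊗ₜ sqm V x q) := by
  simp [quinToQuot]

def IsMulMap (s : CubM V ⊗[ℚ] SqM V →ₗ[ℚ] QuinM V) : Prop :=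
  ∀ q x y z w : V, s (mulC V q (sqm V x y) ⊗ₜ[ℚ] sqm V z w)
    = mulQn V q (mulQ V x (mulC V y (sqm V z w)))

namespace IsMulMap

variable {V} {s : CubM V ⊗[ℚ] SqM V →ₗ[ℚ] QuinM V}

lemma surjective (hs : IsMulMap V s) : Function.Surjective s := by
  have : (LinearMap.range s).mkQ = 0 := quinM_ext V fun q x y z w => by
    rw [← hs, Submodule.mkQ_apply, LinearMap.zero_apply, Submodule.Quotient.mk_eq_zero]
    exact LinearMap.mem_range_self s _
  rw [← LinearMap.range_eq_top, ← Submodule.ker_mkQ (LinearMap.range s), this, LinearMap.ker_zero]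

lemma apply_mulC_tmul_comm (hs : IsMulMap V s) (q : V) (u v : SqM V) :
    s (mulC V q u ⊗ₜ v) = s (mulC V q v ⊗ₜ u) := by
  have : ((TensorProduct.mk ℚ _ _).compr₂ s).comp (mulC V q)
      = (((TensorProduct.mk ℚ _ _).compr₂ s).comp (mulC V q)).flip :=
    sqM_bilinear_ext V fun x y z w => by
      simp only [LinearMap.comp_apply, LinearMap.compr₂_apply, LinearMap.flip_apply,
        TensorProduct.mk_apply]
      rw [hs, hs, mulQ_mulC_sqm_comm]
  exact congr($this u v)

lemma quinToQuot_comp (hs : IsMulMap V s) : quinToQuot V ∘ₗ s = (tmulSwapRel V).mkQ :=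
  cubM_tensor_sqM_ext V fun q x y z w => by
    rw [LinearMap.comp_apply, hs, quinToQuot_mulQn_mulQ, Submodule.mkQ_apply,
      mk_mulC_tmul_comm, mulC_rotate V q x y, mulC_swap V y x q]

lemma ker_le_tmulSwapRel (hs : IsMulMap V s) : LinearMap.ker s ≤ tmulSwapRel V := by
  rw [← Submodule.ker_mkQ (tmulSwapRel V), ← hs.quinToQuot_comp]
  exact LinearMap.ker_le_ker_comp s _

end IsMulMap

/-- **Key step in Lemma 2.1.** The sequence
`0 → R(V) → V ⊗ Λ²(P²V) →(m) P³V ⊗ P²V →(s) P⁵V → 0` is exact, where `s` is induced by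
multiplication in the symmetric algebra: `s` is surjective and `range m = ker s`. -/
theorem exact_m_s
    (m : (V ⊗[ℚ] AltM (SqM V)) →ₗ[ℚ] (CubM V ⊗[ℚ] SqM V))
    (hm : ∀ (q : V) (u v : SqM V),
      m (q ⊗ₜ[ℚ] wdg (SqM V) u v) = mulC V q u ⊗ₜ[ℚ] v - mulC V q v ⊗ₜ[ℚ] u)
    (s : (CubM V ⊗[ℚ] SqM V) →ₗ[ℚ] QuinM V)
    (hs : ∀ q x y z w : V,
      s (mulC V q (sqm V x y) ⊗ₜ[ℚ] sqm V z w)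
        = mulQn V q (mulQ V x (mulC V y (sqm V z w)))) :
    Function.Surjective s ∧ LinearMap.range m = LinearMap.ker s := by
  have range_le_ker : LinearMap.range m ≤ LinearMap.ker s := by
    rw [LinearMap.range_le_ker_iff]
    refine tensor_altM_ext V fun q u v => ?_
    rw [LinearMap.comp_apply, hm, map_sub, IsMulMap.apply_mulC_tmul_comm hs, sub_self,
      LinearMap.zero_apply]
  have tmulSwapRel_le_range : tmulSwapRel V ≤ LinearMap.range m :=
    Submodule.span_le.2 fun _ ⟨q, u, v, h⟩ => ⟨q ⊗ₜ wdg (SqM V) u v, (hm q u v).trans h.symm⟩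
  exact ⟨IsMulMap.surjective hs,
    range_le_ker.antisymm ((IsMulMap.ker_le_tmulSwapRel hs).trans tmulSwapRel_le_range)⟩

end
end

section
/- Let V be a ℚ-vector space and x₁, x₂, x₃, x₄, x₅ ∈ V. Then ⋆(x₁, x₂, x₃, x₄, x₅) lies in R(V), i.e. m(⋆(x₁, x₂, x₃, x₄, x₅)) = 0. -/
/-!
Common constructions: for a `ℚ`-vector space `V`, the symmetric powers
`P²V, P³V, P⁴V, P⁵V` (as `SqM V`, `CubM V`, `QuarM V`, `QuinM V`), built as iterated
quotients of tensor products, with the multiplication maps between them; the exterior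
square `Λ²W` (as `AltM W`) with the wedge map; and the 5-linear map `⋆` (as `star5`).
-/

open TensorProduct

noncomputable section

variable (V W : Type) [AddCommGroup V] [Module ℚ V] [AddCommGroup W] [Module ℚ W]

lemma sqm_comm_s3 (a b : V) : sqm V a b = sqm V b a := by
  show (sqRel V).mkQ _ = (sqRel V).mkQ _
  simp only [Submodule.mkQ_apply]
  rw [Submodule.Quotient.eq]
  exact Submodule.subset_span ⟨a, b, rfl⟩

lemma mulC_swap_s3 (a b c : V) : mulC V a (sqm V b c) = mulC V b (sqm V a c) := by
  show (cubRel V).mkQ _ = (cubRel V).mkQ _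
  simp only [Submodule.mkQ_apply]
  rw [Submodule.Quotient.eq]
  exact Submodule.subset_span ⟨a, b, c, rfl⟩

lemma mulC_rotate_s3 (a b c : V) : mulC V a (sqm V b c) = mulC V b (sqm V c a) := by
  rw [mulC_swap_s3, sqm_comm_s3]

/-- **Claim following Definition 1.5.** For any `x₁, …, x₅ ∈ V`, the element
`⋆(x₁, x₂, x₃, x₄, x₅)` lies in `R(V) = ker m`. -/
theorem star5_mem_ker_m
    (m : (V ⊗[ℚ] AltM (SqM V)) →ₗ[ℚ] (CubM V ⊗[ℚ] SqM V))
    (hm : ∀ (q : V) (u v : SqM V),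
      m (q ⊗ₜ[ℚ] wdg (SqM V) u v) = mulC V q u ⊗ₜ[ℚ] v - mulC V q v ⊗ₜ[ℚ] u)
    (x₁ x₂ x₃ x₄ x₅ : V) :
    m (star5 V x₁ x₂ x₃ x₄ x₅) = 0 := by
  unfold star5
  simp only [map_add, hm]
  rw [mulC_rotate_s3 V x₃ x₁ x₂, mulC_rotate_s3 V x₄ x₂ x₃, mulC_rotate_s3 V x₅ x₃ x₄,
    mulC_rotate_s3 V x₁ x₄ x₅, mulC_rotate_s3 V x₂ x₅ x₁]
  abel

end
end

section
/- Let H be a ℚ-vector space and E ⊆ P²H a subspace. Let j : Λ²(P²H) → P²H ⊗ P²H be the linear map with j(u ∧ v) = u ⊗ v − v ⊗ u, let μ : H ⊗ P²H → P³H be the linear map induced by multiplication in the symmetric algebra, and let K ⊆ H ⊗ E be the kernel of the restriction of μ to H ⊗ E. Let D = (H ⊗ Λ²E) ∩ ker m. Then (Id_H ⊗ j)(D) ⊆ K ⊗ E. -/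
/-!
Common constructions: for a `ℚ`-vector space `V`, the symmetric powers
`P²V, P³V, P⁴V, P⁵V` (as `SqM V`, `CubM V`, `QuarM V`, `QuinM V`), built as iterated
quotients of tensor products, with the multiplication maps between them; the exterior
square `Λ²W` (as `AltM W`) with the wedge map; and the 5-linear map `⋆` (as `star5`).
-/

open TensorProduct

noncomputable section

variable (V W : Type) [AddCommGroup V] [Module ℚ V] [AddCommGroup W] [Module ℚ W]

set_option maxHeartbeats 1000000 in
/-- **Lemma 4.9 (degree 8 component).** Let `H` be a `ℚ`-vector space, `E ⊆ P²H` a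
subspace, `j : Λ²(P²H) → P²H ⊗ P²H` the map with `j(u ∧ v) = u ⊗ v − v ⊗ u`, and
`μ : H ⊗ P²H → P³H` the multiplication map. Let `K` be the kernel of the restriction
of `μ` to `H ⊗ E` and `D = (H ⊗ Λ²E) ∩ ker m`. Then `(Id_H ⊗ j)(D) ⊆ K ⊗ E`. -/
theorem idTensor_j_maps_D_into_K_tensor_E
    (E : Submodule ℚ (SqM V))
    (m : (V ⊗[ℚ] AltM (SqM V)) →ₗ[ℚ] (CubM V ⊗[ℚ] SqM V))
    (hm : ∀ (q : V) (u v : SqM V),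
      m (q ⊗ₜ[ℚ] wdg (SqM V) u v) = mulC V q u ⊗ₜ[ℚ] v - mulC V q v ⊗ₜ[ℚ] u)
    (j : AltM (SqM V) →ₗ[ℚ] (SqM V ⊗[ℚ] SqM V))
    (hj : ∀ u v : SqM V, j (wdg (SqM V) u v) = u ⊗ₜ[ℚ] v - v ⊗ₜ[ℚ] u)
    (μ : (V ⊗[ℚ] SqM V) →ₗ[ℚ] CubM V)
    (hμ : ∀ (q : V) (u : SqM V), μ (q ⊗ₜ[ℚ] u) = mulC V q u) :
    Submodule.map (LinearMap.lTensor V j)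
        ((Submodule.span ℚ {w : V ⊗[ℚ] AltM (SqM V) |
            ∃ (q : V) (u v : SqM V), u ∈ E ∧ v ∈ E ∧ w = q ⊗ₜ[ℚ] wdg (SqM V) u v})
          ⊓ LinearMap.ker m)
      ≤ LinearMap.range
          ((TensorProduct.assoc ℚ V (SqM V) (SqM V)).toLinearMap ∘ₗ
            TensorProduct.map
              ((Submodule.span ℚ {w : V ⊗[ℚ] SqM V | ∃ (q : V) (u : SqM V),
                  u ∈ E ∧ w = q ⊗ₜ[ℚ] u} ⊓ LinearMap.ker μ).subtype)
              E.subtype) := by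
  set S : Submodule ℚ (V ⊗[ℚ] SqM V) :=
    Submodule.span ℚ {w : V ⊗[ℚ] SqM V | ∃ (q : V) (u : SqM V), u ∈ E ∧ w = q ⊗ₜ[ℚ] u} with hS
  set K : Submodule ℚ (V ⊗[ℚ] SqM V) := S ⊓ LinearMap.ker μ with hK
  set μ' : S →ₗ[ℚ] CubM V := μ ∘ₗ S.subtype with hμ'
  -- Key identity: m = (μ ⊗ id) ∘ assoc⁻¹ ∘ (id ⊗ j)
  have key : (LinearMap.rTensor (SqM V) μ) ∘ₗ
      ((TensorProduct.assoc ℚ V (SqM V) (SqM V)).symm.toLinearMap ∘ₗ LinearMap.lTensor V j) = m := by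
    apply TensorProduct.ext'
    intro q a
    induction a using Submodule.Quotient.induction_on with
    | _ w =>
      induction w with
      | zero => simp [show ((0 : SqM V ⊗[ℚ] SqM V) : SqM V ⊗[ℚ] SqM V) = 0 from rfl]
      | add x y hx hy =>
        have : (Submodule.Quotient.mk (x + y) : AltM (SqM V))
            = Submodule.Quotient.mk x + Submodule.Quotient.mk y := rfl
        rw [this, TensorProduct.tmul_add, map_add, map_add, hx, hy]
      | tmul u v =>
        have hw : (Submodule.Quotient.mk (u ⊗ₜ[ℚ] v) : AltM (SqM V)) = wdg (SqM V) u v := rfl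
        rw [hw]
        simp only [LinearMap.comp_apply, LinearMap.lTensor_tmul, hj, hm,
          TensorProduct.tmul_sub, map_sub, LinearEquiv.coe_coe,
          TensorProduct.assoc_symm_tmul, LinearMap.rTensor_tmul, hμ]
  rintro t ⟨d, ⟨hdspan, hdker⟩, rfl⟩
  -- Step 1: lTensor V j d is in the image of S ⊗ E
  have step1 : LinearMap.lTensor V j d ∈ LinearMap.range
      ((TensorProduct.assoc ℚ V (SqM V) (SqM V)).toLinearMap ∘ₗ
        TensorProduct.map S.subtype E.subtype) := by
    have hle : Submodule.span ℚ {w : V ⊗[ℚ] AltM (SqM V) |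
        ∃ (q : V) (u v : SqM V), u ∈ E ∧ v ∈ E ∧ w = q ⊗ₜ[ℚ] wdg (SqM V) u v}
        ≤ (LinearMap.range
          ((TensorProduct.assoc ℚ V (SqM V) (SqM V)).toLinearMap ∘ₗ
            TensorProduct.map S.subtype E.subtype)).comap (LinearMap.lTensor V j) := by
      refine Submodule.span_le.2 ?_
      rintro w ⟨q, u, v, hu, hv, rfl⟩
      rw [SetLike.mem_coe, Submodule.mem_comap]
      have hqu : q ⊗ₜ[ℚ] u ∈ S := Submodule.subset_span ⟨q, u, hu, rfl⟩
      have hqv : q ⊗ₜ[ℚ] v ∈ S := Submodule.subset_span ⟨q, v, hv, rfl⟩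
      refine ⟨(⟨q ⊗ₜ[ℚ] u, hqu⟩ : S) ⊗ₜ[ℚ] (⟨v, hv⟩ : E)
        - (⟨q ⊗ₜ[ℚ] v, hqv⟩ : S) ⊗ₜ[ℚ] (⟨u, hu⟩ : E), ?_⟩
      simp [LinearMap.lTensor_tmul, hj, TensorProduct.tmul_sub, map_sub,
        TensorProduct.map_tmul, TensorProduct.assoc_tmul]
    exact hle hdspan
  obtain ⟨s, hs⟩ := step1
  simp only [LinearMap.comp_apply, LinearEquiv.coe_coe] at hs
  have hs' : TensorProduct.map S.subtype E.subtype s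
      = (TensorProduct.assoc ℚ V (SqM V) (SqM V)).symm (LinearMap.lTensor V j d) := by
    rw [← hs, LinearEquiv.symm_apply_apply]
  -- Step 2: rTensor E μ' s = 0
  have hfac : (LinearMap.rTensor (SqM V) μ) ∘ₗ TensorProduct.map S.subtype E.subtype
      = (LinearMap.lTensor (CubM V) E.subtype) ∘ₗ (LinearMap.rTensor ↥E μ') := by
    simp only [LinearMap.rTensor, LinearMap.lTensor, ← TensorProduct.map_comp]
    rw [LinearMap.comp_id, LinearMap.id_comp, hμ']
    rw [LinearMap.id_comp]
  have hmd : m d = 0 := hdker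
  have h2 : (LinearMap.lTensor (CubM V) E.subtype) ((LinearMap.rTensor ↥E μ') s) = 0 := by
    have := congrArg (LinearMap.rTensor (SqM V) μ) hs'
    rw [← LinearMap.comp_apply, hfac, LinearMap.comp_apply] at this
    rw [this]
    have := LinearMap.congr_fun key d
    simpa [hmd] using this
  have hinj : Function.Injective (LinearMap.lTensor (CubM V) E.subtype) :=
    Module.Flat.lTensor_preserves_injective_linearMap E.subtype E.injective_subtype
  have h3 : (LinearMap.rTensor ↥E μ') s = 0 := hinj (by simpa using h2)
  -- Step 3: exactness gives s in image of (ker μ') ⊗ E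
  haveI : Module.Flat ℚ ↥E := by
    set_option synthInstance.maxHeartbeats 1000000 in infer_instance
  have hexact := Module.Flat.rTensor_exact (R := ℚ) (M := ↥E)
    (N := ↥(LinearMap.ker μ')) (N' := ↥S) (N'' := CubM V)
    (f := (LinearMap.ker μ').subtype) (g := μ') (LinearMap.exact_subtype_ker_map μ')
  obtain ⟨k, hk⟩ := (hexact s).1 h3
  -- map ker μ' into K
  have hKmem : ∀ x : LinearMap.ker μ', (S.subtype ∘ₗ (LinearMap.ker μ').subtype) x ∈ K := by
    rintro ⟨⟨y, hyS⟩, hy⟩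
    exact ⟨hyS, by simpa [hμ'] using hy⟩
  set e : (LinearMap.ker μ') →ₗ[ℚ] K :=
    LinearMap.codRestrict K (S.subtype ∘ₗ (LinearMap.ker μ').subtype) hKmem with he
  refine ⟨LinearMap.rTensor ↥E e k, ?_⟩
  have hKe : K.subtype ∘ₗ e = S.subtype ∘ₗ (LinearMap.ker μ').subtype := rfl
  have : TensorProduct.map K.subtype E.subtype (LinearMap.rTensor ↥E e k)
      = TensorProduct.map S.subtype E.subtype s := by
    rw [← hk]
    have h4 : TensorProduct.map K.subtype E.subtype ∘ₗ LinearMap.rTensor ↥E e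
        = TensorProduct.map S.subtype E.subtype ∘ₗ LinearMap.rTensor ↥E (LinearMap.ker μ').subtype := by
      simp only [LinearMap.rTensor, ← TensorProduct.map_comp, hKe]
    exact LinearMap.congr_fun h4 k
  rw [LinearMap.comp_apply, this, hs', LinearEquiv.coe_coe, LinearEquiv.apply_symm_apply]

end
end
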